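/- The curve C₆ = {F₆ = 0} ⊂ P² passes through each of the points p₁ = [-2:1:1], p₂ = [2:1:1], p₃ = [-1:2:1], p₄ = [1:2:1], p₅ = [3:2i:1], and has multiplicity exactly 2 at p₁, p₂, p₃, p₄ and multiplicity 1 at p₅. -/

import Mathlib

/-!
After the substitution `X ↦ X + a`, the homogeneous components of degree `0`, `1` and `2` of `f`
are `f(a)`, the differential of `f` at `a` and half the Hessian form of `f` at `a` (Taylor's
formula, proved by induction on `f` since both sides behave the same under `f ↦ f * X k`).
So `F₆` has multiplicity `2` at `p₁, …, p₄` because `F₆` and its gradient vanish there while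
`∂²F₆/∂x²` does not, and multiplicity `1` at `p₅` because `F₆(p₅) = 0 ≠ ∂F₆/∂x (p₅)`.
-/

open MvPolynomial

/-- F₆ in the affine chart z = 1, over K = ℚ(i) ⊆ ℂ. -/
noncomputable def f₆C : MvPolynomial (Fin 2) ℂ :=
  let x : MvPolynomial (Fin 2) ℂ := X 0
  let y : MvPolynomial (Fin 2) ℂ := X 1
  4*x^6 - 273*x^4*y^2 - 258*x^2*y^4 - 481*y^6 + 720*x^4*y + 1740*x^2*y^3 +
  4020*y^5 - 520*x^4 - 3190*x^2*y^2 - 12670*y^4 + 1200*x^2*y +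
  17700*y^3 + 900*x^2 - 9225*y^2

/-- Recentering of an affine plane curve at the point (a,b). -/
noncomputable def shiftAt (a b : ℂ) (f : MvPolynomial (Fin 2) ℂ) : MvPolynomial (Fin 2) ℂ :=
  aeval ![X 0 + C a, X 1 + C b] f

/-- Multiplicity of the affine curve f = 0 at the origin is exactly m. -/
def multIs (f : MvPolynomial (Fin 2) ℂ) (m : ℕ) : Prop :=
  (∀ k < m, homogeneousComponent k f = 0) ∧ homogeneousComponent m f ≠ 0

section Taylor

variable {σ R : Type*} [CommSemiring R]

attribute [local instance] MvPolynomial.gradedAlgebra in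
lemma homogeneousComponent_mul_of_isHomogeneous {p q : MvPolynomial σ R} {i : ℕ} (n : ℕ)
    (hq : q.IsHomogeneous i) :
    homogeneousComponent n (p * q) = if i ≤ n then homogeneousComponent (n - i) p * q else 0 := by
  simpa [← decomposition.decompose'_apply] using
    DirectSum.coe_decompose_mul_of_right_mem (𝒜 := homogeneousSubmodule σ R) (a := p) n hq

lemma homogeneousComponent_succ_C (n : ℕ) (r : R) :
    homogeneousComponent (n + 1) (C r : MvPolynomial σ R) = 0 :=
  homogeneousComponent_eq_zero _ _ (by simp)

lemma pderiv_ofNat (i : σ) (n : ℕ) [n.AtLeastTwo] :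
    pderiv i (no_index (OfNat.ofNat n) : MvPolynomial σ R) = 0 := by
  rw [← Nat.cast_ofNat]
  exact (pderiv i).map_natCast n

noncomputable def recenter (a : σ → R) : MvPolynomial σ R →ₐ[R] MvPolynomial σ R :=
  aeval fun i => X i + C (a i)

lemma recenter_mul_X (a : σ → R) (f : MvPolynomial σ R) (i : σ) :
    recenter a (f * X i) = recenter a f * X i + C (a i) * recenter a f := by
  simp only [recenter, map_mul, aeval_X]
  ring

lemma homogeneousComponent_succ_recenter_mul_X (a : σ → R) (f : MvPolynomial σ R) (i : σ)
    (n : ℕ) :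
    homogeneousComponent (n + 1) (recenter a (f * X i)) =
      homogeneousComponent n (recenter a f) * X i +
        C (a i) * homogeneousComponent (n + 1) (recenter a f) := by
  rw [recenter_mul_X, map_add, homogeneousComponent_C_mul,
    homogeneousComponent_mul_of_isHomogeneous _ (isHomogeneous_X R i)]
  simp

lemma homogeneousComponent_zero_recenter (a : σ → R) (f : MvPolynomial σ R) :
    homogeneousComponent 0 (recenter a f) = C (eval a f) := by
  rw [homogeneousComponent_zero, ← constantCoeff_eq]
  induction f using MvPolynomial.induction_on with
  | C r => simp [recenter]
  | add p q hp hq => simp [hp, hq]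
  | mul_X p i hp => simp [recenter_mul_X, hp, mul_comm]

variable [DecidableEq σ]

lemma eval_pderiv_pderiv_mul_X (a : σ → R) (p : MvPolynomial σ R) (i j k : σ) :
    eval a (pderiv i (pderiv j (p * X k))) = eval a (pderiv i (pderiv j p)) * a k +
      ((if k = i then eval a (pderiv j p) else 0) + if k = j then eval a (pderiv i p) else 0) := by
  simp only [pderiv_mul, pderiv_X, Pi.single_apply, map_add, map_mul, eval_X]
  split_ifs <;> simp [add_assoc]

variable [Fintype σ]

lemma homogeneousComponent_one_recenter (a : σ → R) (f : MvPolynomial σ R) :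
    homogeneousComponent 1 (recenter a f) = ∑ i, C (eval a (pderiv i f)) * X i := by
  induction f using MvPolynomial.induction_on with
  | C r => simp [recenter, homogeneousComponent_succ_C]
  | add p q hp hq => simp [hp, hq, Finset.sum_add_distrib, add_mul]
  | mul_X p k hp =>
    rw [homogeneousComponent_succ_recenter_mul_X, hp, homogeneousComponent_zero_recenter]
    simp [pderiv_X, Pi.single_apply, add_mul, Finset.sum_add_distrib, Finset.mul_sum, apply_ite,
      ite_mul, mul_assoc]

lemma two_mul_homogeneousComponent_two_recenter (a : σ → R) (f : MvPolynomial σ R) :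
    2 * homogeneousComponent 2 (recenter a f) =
      ∑ i, ∑ j, C (eval a (pderiv i (pderiv j f))) * X i * X j := by
  induction f using MvPolynomial.induction_on with
  | C r => simp [recenter, homogeneousComponent_succ_C]
  | add p q hp hq => simp [mul_add, hp, hq, Finset.sum_add_distrib, add_mul]
  | mul_X p k hp =>
    rw [homogeneousComponent_succ_recenter_mul_X a p k 1, mul_add, mul_left_comm _ (C (a k)), hp,
      homogeneousComponent_one_recenter]
    simp only [eval_pderiv_pderiv_mul_X, map_add, add_mul, Finset.sum_add_distrib, apply_ite C,
      map_zero, ite_mul, zero_mul, Finset.sum_ite_irrel, Finset.sum_const_zero, Finset.sum_ite_eq,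
      Finset.mem_univ, if_true, map_mul, Finset.mul_sum, Finset.sum_mul]
    simp only [two_mul, Finset.sum_add_distrib, mul_assoc, mul_comm (X k), mul_left_comm (C (a k))]
    abel

lemma homogeneousComponent_one_recenter_ne_zero {a : σ → R} {f : MvPolynomial σ R} (i : σ)
    (hi : eval a (pderiv i f) ≠ 0) : homogeneousComponent 1 (recenter a f) ≠ 0 := by
  intro h
  apply hi
  simpa [h, Pi.single_apply] using
    (congrArg (eval (Pi.single i 1)) (homogeneousComponent_one_recenter a f)).symm

lemma homogeneousComponent_two_recenter_ne_zero {a : σ → R} {f : MvPolynomial σ R} (i : σ)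
    (hi : eval a (pderiv i (pderiv i f)) ≠ 0) : homogeneousComponent 2 (recenter a f) ≠ 0 := by
  intro h
  apply hi
  simpa [h, Pi.single_apply] using
    (congrArg (eval (Pi.single i 1)) (two_mul_homogeneousComponent_two_recenter a f)).symm

end Taylor

lemma shiftAt_eq_recenter (a b : ℂ) (f : MvPolynomial (Fin 2) ℂ) :
    shiftAt a b f = recenter ![a, b] f := by
  unfold shiftAt recenter
  congr
  funext i
  fin_cases i <;> rfl

lemma multIs_recenter_one {a : Fin 2 → ℂ} {f : MvPolynomial (Fin 2) ℂ} (i : Fin 2)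
    (h₀ : eval a f = 0) (h₁ : eval a (pderiv i f) ≠ 0) : multIs (recenter a f) 1 := by
  refine ⟨fun k hk => ?_, homogeneousComponent_one_recenter_ne_zero i h₁⟩
  obtain rfl : k = 0 := by omega
  rw [homogeneousComponent_zero_recenter, h₀, map_zero]

lemma multIs_recenter_two {a : Fin 2 → ℂ} {f : MvPolynomial (Fin 2) ℂ} (i : Fin 2)
    (h₀ : eval a f = 0) (h₁ : ∀ j, eval a (pderiv j f) = 0)
    (h₂ : eval a (pderiv i (pderiv i f)) ≠ 0) : multIs (recenter a f) 2 := by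
  refine ⟨fun k hk => ?_, homogeneousComponent_two_recenter_ne_zero i h₂⟩
  interval_cases k
  · rw [homogeneousComponent_zero_recenter, h₀, map_zero]
  · simp [homogeneousComponent_one_recenter, h₁]

/-- C₆ passes through p₁ = [-2:1:1], p₂ = [2:1:1], p₃ = [-1:2:1], p₄ = [1:2:1],
p₅ = [3:2i:1], with multiplicity exactly 2 at p₁,…,p₄ and 1 at p₅. -/
theorem stmt16 :
    multIs (shiftAt (-2) 1 f₆C) 2 ∧
    multIs (shiftAt 2 1 f₆C) 2 ∧
    multIs (shiftAt (-1) 2 f₆C) 2 ∧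
    multIs (shiftAt 1 2 f₆C) 2 ∧
    multIs (shiftAt 3 (2 * Complex.I) f₆C) 1 := by
  simp only [shiftAt_eq_recenter]
  refine ⟨multIs_recenter_two 0 ?_ ?_ ?_, multIs_recenter_two 0 ?_ ?_ ?_,
    multIs_recenter_two 0 ?_ ?_ ?_, multIs_recenter_two 0 ?_ ?_ ?_, multIs_recenter_one 0 ?_ ?_⟩
  all_goals
    norm_num [f₆C, pderiv_X, pderiv_ofNat, Fin.forall_fin_two, Complex.ext_iff, pow_succ]
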